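/- arXiv:2307.04224 — 4 statements merged into one kernel-verified Lean document; each statement's English description precedes it below -/
import Mathlib

section
/- Let d_1,…,d_r be positive integers and d = d_1+⋯+d_r. For every θ = (θ_1,…,θ_r) ∈ ℝ^r with θ_1²+⋯+θ_r² = 1 one has ∑_{i=1}^r (θ_i² − θ_i⁴/d_i) ≤ (d−1)/d, with equality if and only if θ_i² = d_i/d for every i. -/
/-!
With `xᵢ = θᵢ²` and `D = ∑ dᵢ`, the claim reads `1/D ≤ ∑ xᵢ²/dᵢ` under `∑ xᵢ = 1`, which is the
Cauchy–Schwarz inequality in Sedrakyan's form. Both the inequality and its equality case come from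
the exact defect `∑ xᵢ²/wᵢ - (∑ xᵢ)²/∑ wᵢ = ∑ wᵢ (xᵢ/wᵢ - ∑ xᵢ/∑ wᵢ)²`, a sum of nonnegative
terms which vanishes iff every ratio `xᵢ/wᵢ` equals `∑ xᵢ/∑ wᵢ`.
-/

open Finset

section Sedrakyan

variable {ι : Type*} (s : Finset ι) (x : ι → ℝ) {w : ι → ℝ}

theorem Finset.sum_sq_div_sub_sq_sum_div_eq (hw : ∀ i ∈ s, w i ≠ 0) :
    ∑ i ∈ s, x i ^ 2 / w i - (∑ i ∈ s, x i) ^ 2 / ∑ i ∈ s, w i =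
      ∑ i ∈ s, w i * (x i / w i - (∑ i ∈ s, x i) / ∑ i ∈ s, w i) ^ 2 := by
  set c := (∑ i ∈ s, x i) / ∑ i ∈ s, w i
  have hterm : ∀ i ∈ s, w i * (x i / w i - c) ^ 2 = x i ^ 2 / w i - 2 * c * x i + c ^ 2 * w i := by
    intro i hi
    field_simp [hw i hi]
    ring
  -- `c * ∑ w = ∑ x` fails when `∑ w = 0`, but then `c = 0` and both sides reduce to `∑ x²/w`.
  have hc : c ^ 2 * ∑ i ∈ s, w i = c * ∑ i ∈ s, x i := by
    rcases eq_or_ne (∑ i ∈ s, w i) 0 with hW | hW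
    · simp [c, hW]
    · simp only [c]
      field_simp
  rw [sum_congr rfl hterm, sum_add_distrib, sum_sub_distrib, ← mul_sum, ← mul_sum, hc]
  simp only [c]
  ring

theorem Finset.sq_sum_div_eq_sum_sq_div_iff (hw : ∀ i ∈ s, 0 < w i) :
    (∑ i ∈ s, x i) ^ 2 / ∑ i ∈ s, w i = ∑ i ∈ s, x i ^ 2 / w i ↔
      ∀ i ∈ s, x i / w i = (∑ i ∈ s, x i) / ∑ i ∈ s, w i := by
  have hdefect := s.sum_sq_div_sub_sq_sum_div_eq x fun i hi => (hw i hi).ne'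
  have hnonneg : ∀ i ∈ s, 0 ≤ w i * (x i / w i - (∑ i ∈ s, x i) / ∑ i ∈ s, w i) ^ 2 :=
    fun i hi => mul_nonneg (hw i hi).le (sq_nonneg _)
  rw [eq_comm, ← sub_eq_zero, hdefect, sum_eq_zero_iff_of_nonneg hnonneg]
  refine forall₂_congr fun i hi => ?_
  rw [mul_eq_zero, or_iff_right (hw i hi).ne', sq_eq_zero_iff, sub_eq_zero]

end Sedrakyan

/-- for positive integers `d₁, …, d_r` with `d = d₁ + ⋯ + d_r` and any
`θ ∈ ℝ^r` with `∑ θᵢ² = 1`, one has `∑ᵢ (θᵢ² − θᵢ⁴/dᵢ) ≤ (d−1)/d`, with equality iff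
`θᵢ² = dᵢ/d` for every `i`. -/
theorem sum_theta_le (r : ℕ) (d : Fin r → ℕ) (hd : ∀ i, 0 < d i)
    (θ : Fin r → ℝ) (hθ : ∑ i, θ i ^ 2 = 1) :
    (∑ i, (θ i ^ 2 - θ i ^ 4 / (d i : ℝ))) ≤ ((∑ i, d i : ℝ) - 1) / (∑ i, d i : ℝ) ∧
    ((∑ i, (θ i ^ 2 - θ i ^ 4 / (d i : ℝ))) = ((∑ i, d i : ℝ) - 1) / (∑ i, d i : ℝ) ↔
      ∀ i, θ i ^ 2 = (d i : ℝ) / (∑ i, d i : ℝ)) := by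
  set D : ℝ := ∑ i, (d i : ℝ)
  have hdpos : ∀ i ∈ univ, (0 : ℝ) < d i := fun i _ => Nat.cast_pos.mpr (hd i)
  have hr : (univ : Finset (Fin r)).Nonempty :=
    univ_nonempty_iff.mpr ⟨⟨0, Nat.pos_of_ne_zero fun h => by subst h; simp at hθ⟩⟩
  have hD : 0 < D := sum_pos hdpos hr
  have hlhs : ∑ i, (θ i ^ 2 - θ i ^ 4 / (d i : ℝ)) = 1 - ∑ i, (θ i ^ 2) ^ 2 / (d i : ℝ) := by
    simp only [sum_sub_distrib, hθ, ← pow_mul]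
  have hrhs : (D - 1) / D = 1 - (∑ i, θ i ^ 2) ^ 2 / D := by
    rw [hθ]
    field_simp
  rw [hlhs, hrhs]
  refine ⟨?_, ?_⟩
  · linarith [univ.sq_sum_div_le_sum_sq_div (fun i => θ i ^ 2) hdpos]
  · rw [sub_right_inj, eq_comm, univ.sq_sum_div_eq_sum_sq_div_iff _ hdpos, hθ]
    simp only [mem_univ, true_implies]
    refine forall_congr' fun i => ?_
    rw [div_eq_div_iff (hdpos i (mem_univ i)).ne' hD.ne', one_mul, eq_div_iff hD.ne']
end

section
/- Let ℓ_1,…,ℓ_r be unit vectors, ℓ_i ∈ EuclideanSpace ℝ (Fin (n_i+1)), and let v_i, w_i satisfy ⟨v_i,ℓ_i⟩ = ⟨w_i,ℓ_i⟩ = 0 for each i. Then the Fréchet derivative DΨ(ℓ) of Ψ at ℓ = (ℓ_1,…,ℓ_r) satisfies ⟨DΨ(ℓ)(v_1,…,v_r), DΨ(ℓ)(w_1,…,w_r)⟩ = ∑_{i=1}^r d_i·⟨v_i,w_i⟩. (Hence, up to the scaling factors sqrt(d_i) in each factor, the parametrization Ψ of the Segre–Veronese manifold by the product of unit spheres is a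 local isometry.) -/
open scoped RealInnerProductSpace BigOperators

noncomputable section

/-- The set of exponent vectors `α : Fin (n+1) → ℕ` with `|α| = d`. -/
abbrev Exps (n d : ℕ) : Type := {α : Fin (n + 1) → ℕ // ∑ i, α i = d}

instance (n d : ℕ) : Fintype (Exps n d) :=
  Fintype.subtype (Finset.Nat.antidiagonalTuple (n + 1) d) fun _ =>
    Finset.Nat.mem_antidiagonalTuple

/-- The Veronese map in Bombieri–Weyl coordinates. -/
def veronese (n d : ℕ) (ℓ : EuclideanSpace ℝ (Fin (n + 1))) :
    EuclideanSpace ℝ (Exps n d) := WithLp.toLp 2 fun α =>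
  Real.sqrt ((d.factorial : ℝ) / ∏ i, ((α.1 i).factorial : ℝ)) * ∏ i, ℓ i ^ α.1 i

/-- The Segre–Veronese parametrization. -/
def Psi (r : ℕ) (n d : Fin r → ℕ)
    (ℓ : (i : Fin r) → EuclideanSpace ℝ (Fin (n i + 1))) :
    EuclideanSpace ℝ ((i : Fin r) → Exps (n i) (d i)) := WithLp.toLp 2 fun α =>
  ∏ i, veronese (n i) (d i) (ℓ i) (α i)

/-!
The Bombieri–Weyl weights are exactly the multinomial coefficients, so the multinomial theorem
gives `⟪ν(x), ν(y)⟫ = ⟪x, y⟫ ^ d`, and hence `⟪Ψ(x), Ψ(y)⟫ = ∏ᵢ ⟪xᵢ, yᵢ⟫ ^ dᵢ`. On the lines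
`ℓ + t • v` and `ℓ + s • w` through a point of the product of unit spheres with tangent
directions `v`, `w`, this becomes `∏ᵢ (1 + s t ⟪vᵢ, wᵢ⟫) ^ dᵢ`, whose mixed derivative at
`s = t = 0` is `∑ᵢ dᵢ ⟪vᵢ, wᵢ⟫`; and the mixed derivative of `⟪f(x + t • v), f(x + s • w)⟫`
is `⟪Df(x) v, Df(x) w⟫`.
-/

open Finset

theorem Nat.cast_multinomial {ι K : Type*} [Field K] [CharZero K] (s : Finset ι) (f : ι → ℕ) :
    (Nat.multinomial s f : K) =
      ((∑ i ∈ s, f i).factorial : K) / ∏ i ∈ s, ((f i).factorial : K) := by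
  rw [Nat.multinomial, Nat.cast_div (Nat.prod_factorial_dvd_factorial_sum _ _)
    (Nat.cast_ne_zero.mpr (prod_pos fun i _ => (f i).factorial_pos).ne')]
  push_cast
  rfl

theorem hasDerivAt_prod_one_add_mul_pow {𝕜 ι : Type*} [NontriviallyNormedField 𝕜]
    (u : Finset ι) (a : ι → 𝕜) (k : ι → ℕ) :
    HasDerivAt (fun s : 𝕜 => ∏ i ∈ u, (1 + s * a i) ^ k i) (∑ i ∈ u, k i * a i) 0 := by
  classical
  have hfactor (i : ι) : HasDerivAt (fun s : 𝕜 => (1 + s * a i) ^ k i) (k i * a i) 0 := by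
    simpa using (((hasDerivAt_id (0 : 𝕜)).mul_const (a i)).const_add 1).fun_pow (k i)
  simpa using HasDerivAt.fun_finsetProd (u := u) fun i _ => hfactor i

section

variable {E F : Type*} [NormedAddCommGroup E] [NormedAddCommGroup F] [InnerProductSpace ℝ F]

theorem inner_add_smul_add_smul_of_inner_eq_zero {ℓ v w : F} (hℓ : ‖ℓ‖ = 1)
    (hv : ⟪v, ℓ⟫ = 0) (hw : ⟪w, ℓ⟫ = 0) (t s : ℝ) :
    ⟪ℓ + t • v, ℓ + s • w⟫ = 1 + s * (t * ⟪v, w⟫) := by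
  simp only [inner_add_left, inner_add_right, real_inner_smul_left, real_inner_smul_right,
    real_inner_self_eq_norm_sq, hℓ, hv, real_inner_comm ℓ w ▸ hw]
  ring

theorem inner_fderiv_fderiv_eq_of_hasDerivAt [NormedSpace ℝ E] {f : E → F} {x : E}
    (hf : DifferentiableAt ℝ f x) (v w : E) {C : ℝ}
    (h : ∀ t : ℝ, HasDerivAt (fun s : ℝ => ⟪f (x + t • v), f (x + s • w)⟫) (t * C) 0) :
    ⟪fderiv ℝ f x v, fderiv ℝ f x w⟫ = C := by
  have hline (u : E) : HasDerivAt (fun t : ℝ => f (x + t • u)) (fderiv ℝ f x u) 0 :=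
    hf.hasFDerivAt.hasLineDerivAt u
  have hslice (t : ℝ) : ⟪f (x + t • v), fderiv ℝ f x w⟫ = t * C := by
    refine HasDerivAt.unique ?_ (h t)
    simpa using (hasDerivAt_const (0 : ℝ) (f (x + t • v))).inner ℝ (hline w)
  have hderiv := (hline v).inner ℝ (hasDerivAt_const (0 : ℝ) (fderiv ℝ f x w))
  simp only [hslice, inner_zero_right] at hderiv
  simpa using hderiv.unique ((hasDerivAt_id (0 : ℝ)).mul_const C)

end

theorem veronese_mul_veronese {n d : ℕ} (x y : EuclideanSpace ℝ (Fin (n + 1)))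
    (α : Exps n d) :
    veronese n d x α * veronese n d y α =
      Nat.multinomial univ α.1 * ∏ i, (x i * y i) ^ α.1 i := by
  obtain ⟨α, rfl⟩ := α
  simp only [veronese, PiLp.toLp_apply]
  rw [mul_mul_mul_comm, Real.mul_self_sqrt (by positivity), ← Nat.cast_multinomial,
    ← prod_mul_distrib]
  simp only [mul_pow]

theorem inner_veronese (n d : ℕ) (x y : EuclideanSpace ℝ (Fin (n + 1))) :
    ⟪veronese n d x, veronese n d y⟫ = ⟪x, y⟫ ^ d := by
  classical
  calc ⟪veronese n d x, veronese n d y⟫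
      = ∑ α : Exps n d, Nat.multinomial univ α.1 * ∏ i, (x i * y i) ^ α.1 i := by
        simp only [PiLp.inner_apply, RCLike.inner_apply, conj_trivial, mul_comm,
          veronese_mul_veronese]
    _ = (∑ i, x i * y i) ^ d := by
        rw [sum_pow_eq_sum_piAntidiag, piAntidiag_univ_fin_eq_antidiagonalTuple,
          sum_subtype _ fun _ => Nat.mem_antidiagonalTuple]
    _ = ⟪x, y⟫ ^ d := by
        simp only [PiLp.inner_apply, RCLike.inner_apply, conj_trivial, mul_comm]

theorem inner_Psi (r : ℕ) (n d : Fin r → ℕ)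
    (x y : (i : Fin r) → EuclideanSpace ℝ (Fin (n i + 1))) :
    ⟪Psi r n d x, Psi r n d y⟫ = ∏ i, ⟪x i, y i⟫ ^ d i := by
  simp_rw [← inner_veronese, PiLp.inner_apply, Fintype.prod_sum]
  simp [Psi, prod_mul_distrib]

theorem differentiable_Psi (r : ℕ) (n d : Fin r → ℕ) :
    Differentiable ℝ (Psi r n d) := by
  refine (differentiable_piLp 2).mpr fun α => ?_
  simp only [Psi, veronese, PiLp.toLp_apply]
  fun_prop

theorem fderiv_Psi_inner_general (r : ℕ) (n d : Fin r → ℕ)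
    (ℓ v w : (i : Fin r) → EuclideanSpace ℝ (Fin (n i + 1)))
    (hℓ : ∀ i, ‖ℓ i‖ = 1) (hv : ∀ i, ⟪v i, ℓ i⟫ = 0) (hw : ∀ i, ⟪w i, ℓ i⟫ = 0) :
    ⟪fderiv ℝ (Psi r n d) ℓ v, fderiv ℝ (Psi r n d) ℓ w⟫ =
      ∑ i, (d i : ℝ) * ⟪v i, w i⟫ := by
  refine inner_fderiv_fderiv_eq_of_hasDerivAt (differentiable_Psi r n d ℓ) v w fun t => ?_
  have key := hasDerivAt_prod_one_add_mul_pow univ (fun i => t * ⟪v i, w i⟫) d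
  simp only [inner_Psi, Pi.add_apply, Pi.smul_apply,
    inner_add_smul_add_smul_of_inner_eq_zero (hℓ _) (hv _) (hw _)]
  refine key.congr_deriv ?_
  rw [mul_sum]
  exact sum_congr rfl fun i _ => by ring

/-- on tangent vectors of the product of unit spheres, the Fréchet
derivative of `Ψ` satisfies
`⟨DΨ(ℓ)v, DΨ(ℓ)w⟩ = ∑ᵢ dᵢ ⟨vᵢ, wᵢ⟩`. -/
theorem fderiv_Psi_inner (r : ℕ) (n d : Fin r → ℕ) (hn : ∀ i, 0 < n i)
    (hd : ∀ i, 0 < d i)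
    (ℓ v w : (i : Fin r) → EuclideanSpace ℝ (Fin (n i + 1)))
    (hℓ : ∀ i, ‖ℓ i‖ = 1) (hv : ∀ i, ⟪v i, ℓ i⟫ = 0) (hw : ∀ i, ⟪w i, ℓ i⟫ = 0) :
    ⟪fderiv ℝ (Psi r n d) ℓ v, fderiv ℝ (Psi r n d) ℓ w⟫ =
      ∑ i, (d i : ℝ) * ⟪v i, w i⟫ :=
  fderiv_Psi_inner_general r n d ℓ v w hℓ hv hw
end
end

section
/- For every polynomial f ∈ MvPolynomial (Fin (n+1)) ℝ that is homogeneous of degree d and every ℓ = (ℓ_0,…,ℓ_n) ∈ ℝ^{n+1}, the Bombieri–Weyl inner product of f with the d-th power of the linear form ℓ_0X_0+⋯+ℓ_nX_n reproduces evaluation: ⟨f, (ℓ_0X_0+⋯+ℓ_nX_n)^d⟩_BW = f(ℓ_0,…,ℓ_n). -/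
/-! By the multinomial theorem the `α`-coefficient of `(∑ ℓᵢ Xᵢ)^d` is `(d! / α!) ℓ^α`, so the
Bombieri–Weyl weight `α! / d!` cancels the multinomial coefficient and the inner product becomes
`∑_α coeff α f · ℓ^α = f(ℓ)`. -/

open MvPolynomial

theorem Finsupp.prod_factorial_mul_multinomial {σ : Type*} [Fintype σ] (s : σ →₀ ℕ) :
    (∏ i, (s i).factorial) * s.multinomial = s.degree.factorial := by
  rw [Finsupp.multinomial_eq_of_support_subset (Finset.subset_univ _), Nat.multinomial_spec,
    Finsupp.degree_eq_sum]

namespace MvPolynomial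

theorem coeff_sum_C_mul_X_pow {σ R : Type*} [CommSemiring R] [Fintype σ] (a : σ → R)
    {s : σ →₀ ℕ} {n : ℕ} (hs : s.degree = n) :
    coeff s ((∑ i, C (a i) * X i) ^ n) = s.multinomial * ∏ i, a i ^ s i := by
  simp_rw [← smul_eq_C_mul]
  rw [coeff_linearCombination_X_pow_of_fintype, if_pos (show s.sum (fun _ m ↦ m) = n from hs),
    Finsupp.prod_fintype _ _ fun _ ↦ pow_zero _]

theorem IsHomogeneous.degree_eq_of_mem_support {σ R : Type*} [CommSemiring R]
    {φ : MvPolynomial σ R} {n : ℕ} (hφ : φ.IsHomogeneous n) {s : σ →₀ ℕ}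
    (hs : s ∈ φ.support) : s.degree = n := by
  by_contra h
  exact mem_support_iff.mp hs (hφ.coeff_eq_zero h)

end MvPolynomial

theorem bombieriWeyl_reproducing_general (n d : ℕ)
    (f : MvPolynomial (Fin (n + 1)) ℝ) (hf : f.IsHomogeneous d)
    (ℓ : Fin (n + 1) → ℝ) :
    ∑ α ∈ f.support,
        coeff α f * coeff α ((∑ i, C (ℓ i) * X i) ^ d) *
          ((∏ i, Nat.factorial (α i) : ℕ) : ℝ) / (Nat.factorial d : ℝ) =
      eval ℓ f := by
  rw [eval_eq']
  refine Finset.sum_congr rfl fun α hα ↦ ?_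
  have hαd := hf.degree_eq_of_mem_support hα
  rw [coeff_sum_C_mul_X_pow ℓ hαd, ← hαd, ← α.prod_factorial_mul_multinomial]
  have : (α.multinomial : ℝ) ≠ 0 := by
    rw [Finsupp.multinomial_eq]; exact Nat.cast_ne_zero.mpr (Nat.multinomial_pos _ _).ne'
  push_cast
  field_simp

/-- reproducing property of the Bombieri–Weyl inner product: for a
polynomial `f` homogeneous of degree `d` and a linear form `ℓ₀X₀ + ⋯ + ℓₙXₙ`, the
Bombieri–Weyl inner product
`⟨f, g⟩ = ∑_{|α| = d} coeff α f · coeff α g · (α₀!⋯αₙ!)/d!` of `f` with the `d`-th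
power of the linear form equals the evaluation `f(ℓ₀, …, ℓₙ)`. (Since `f` is
homogeneous of degree `d`, summing over the support of `f` is the same as summing
over all `α` with `|α| = d`.) -/
theorem bombieriWeyl_reproducing (n d : ℕ) (hn : 0 < n) (hd : 0 < d)
    (f : MvPolynomial (Fin (n + 1)) ℝ) (hf : f.IsHomogeneous d)
    (ℓ : Fin (n + 1) → ℝ) :
    ∑ α ∈ f.support,
        coeff α f * coeff α ((∑ i, C (ℓ i) * X i) ^ d) *
          ((∏ i, Nat.factorial (α i) : ℕ) : ℝ) / (Nat.factorial d : ℝ) =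
      eval ℓ f :=
  bombieriWeyl_reproducing_general n d f hf ℓ
end

section
/- Let d = (d_1,…,d_r) be a tuple of positive integers and m_1,…,m_r nonnegative integers with m = m_1+⋯+m_r. Let L be the random real symmetric m×m matrix whose entries (L_{ij})_{i≤j} are independent centered real Gaussian random variables with, for i < j, Var(L_{ij}) = d_k(d_k−1) if i and j lie in the same group I_k of the partition and Var(L_{ij}) = 1 if they lie in different groups, the diagonal entries being centered Gaussians (of arbitrary variance), and L_{ji} = L_{ij}. Then E[det L] = D_d(m_1,…,m_r). -/
/-!
Expanding `det L = ∑_σ sign σ ∏_x L_{σ x, x}` and using independence of the upper-triangular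
entries, the expectation of the term of `σ` is the product over the entries `p` of the
Gaussian moments `E[L_p ^ n_p]`, where `n_p` counts the `x` with `{σ x, x} = p`. A centered
Gaussian has vanishing first moment, and some `n_p = 1` unless `σ` is a fixed-point-free
involution; for such `σ` the entries `{a, σ a}` are hit exactly twice, contributing their
variances, and `sign σ = (-1)^{m/2}`.
-/

open scoped BigOperators NNReal
open MeasureTheory ProbabilityTheory

noncomputable section

/-- The vertex set `{1, …, m}` with `m = m₁ + ⋯ + m_r`, partitioned into groups
`I₁, …, I_r` with `|I_k| = m_k`. -/
abbrev GroupedIdx (r : ℕ) (m : Fin r → ℕ) : Type := Σ k : Fin r, Fin (m k)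

/-- The position of a vertex in the consecutive ordering of the groups `I₁, …, I_r`. -/
def idx (r : ℕ) (m : Fin r → ℕ) (p : GroupedIdx r m) : ℕ :=
  (∑ j ∈ Finset.univ.filter (fun j => j < p.1), m j) + p.2

/-- The weight of the pair `{a, b}`: `d_k (d_k − 1)` if `a` and `b` lie in the same
group `I_k`, and `1` if they lie in different groups. -/
def pairWeight (r : ℕ) (d : Fin r → ℕ) (m : Fin r → ℕ) (a b : GroupedIdx r m) : ℝ :=
  if a.1 = b.1 then (d a.1 * (d a.1 - 1) : ℕ) else 1

open Finset

lemma integrable_pow_gaussianReal (μ : ℝ) (v : ℝ≥0) (n : ℕ) :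
    Integrable (fun x => x ^ n) (gaussianReal μ v) := by
  refine (integrable_norm_iff (by fun_prop)).mp ?_
  simpa [norm_pow] using (memLp_id_gaussianReal (μ := μ) (v := v) n).integrable_norm_pow'

lemma integral_sq_gaussianReal (v : ℝ≥0) : ∫ x, x ^ 2 ∂gaussianReal 0 v = v := by
  simpa [variance_eq_integral measurable_id'.aemeasurable, integral_id_gaussianReal]
    using variance_fun_id_gaussianReal (μ := 0) (v := v)

section Moments

variable {ι κ : Type*} [Fintype ι] [Fintype κ] [DecidableEq κ]

lemma prod_comp_eq_prod_pow_card_fiber {M : Type*} [CommMonoid M] (f : κ → M) (φ : ι → κ) :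
    ∏ x, f (φ x) = ∏ k, f k ^ #{x | φ x = k} := by
  simp_rw [← prod_fiberwise' univ φ f, prod_const]

variable (μ : κ → Measure ℝ) [∀ k, SigmaFinite (μ k)] (φ : ι → κ)

lemma integrable_prod_comp (hμ : ∀ k n, Integrable (fun t : ℝ => t ^ n) (μ k)) :
    Integrable (fun ω : κ → ℝ => ∏ x, ω (φ x)) (Measure.pi μ) := by
  simp_rw [prod_comp_eq_prod_pow_card_fiber]
  exact Integrable.fintype_prod fun k => hμ k _

lemma integral_prod_comp :
    ∫ ω : κ → ℝ, ∏ x, ω (φ x) ∂Measure.pi μ =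
      ∏ k, ∫ t, t ^ #{x | φ x = k} ∂μ k := by
  simp_rw [prod_comp_eq_prod_pow_card_fiber]
  exact integral_fintype_prod_eq_prod (fun k t => t ^ #{x | φ x = k})

end Moments

lemma Equiv.Perm.sign_of_fixedPointFree_involution {ι : Type*} [Fintype ι] [DecidableEq ι]
    {σ : Equiv.Perm ι} (hσ : σ * σ = 1) (hfix : ∀ a, σ a ≠ a) :
    Equiv.Perm.sign σ = (-1) ^ (Fintype.card ι / 2) := by
  have hsq : σ ^ 2 = 1 := by rw [sq, hσ]
  rw [Equiv.Perm.sign_of_cycleType_eq_replicate two_pos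
      (Equiv.Perm.cycleType_of_pow_prime_eq_one hsq),
    if_neg (Nat.not_odd_iff_even.mpr even_two)]
  simp [Function.fixedPoints, Function.IsFixedPt, hfix]

section SortPair

variable {ι : Type*} (g : ι → ℕ)

abbrev UpperPair : Type _ := {p : ι × ι // g p.1 ≤ g p.2}

def sortPair (a b : ι) : UpperPair g :=
  if h : g a ≤ g b then ⟨(a, b), h⟩ else ⟨(b, a), le_of_not_ge h⟩

def UpperPair.toSym2 (p : UpperPair g) : Sym2 ι := s(p.1.1, p.1.2)

variable {g}

lemma sortPair_of_le {a b : ι} (h : g a ≤ g b) : sortPair g a b = ⟨(a, b), h⟩ := dif_pos h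

lemma toSym2_sortPair (a b : ι) : UpperPair.toSym2 g (sortPair g a b) = s(a, b) := by
  unfold sortPair
  split_ifs
  · rfl
  · exact Sym2.eq_swap

lemma UpperPair.toSym2_injective (hg : Function.Injective g) :
    Function.Injective (UpperPair.toSym2 g) := by
  rintro ⟨⟨a, b⟩, hab⟩ ⟨⟨c, d⟩, hcd⟩ h
  rcases Sym2.eq_iff.mp h with ⟨rfl, rfl⟩ | ⟨rfl, rfl⟩
  · rfl
  · obtain rfl : a = b := hg (le_antisymm hab hcd)
    rfl

lemma sortPair_eq_sortPair_iff (hg : Function.Injective g) {a b c d : ι} :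
    sortPair g a b = sortPair g c d ↔ (a = c ∧ b = d) ∨ (a = d ∧ b = c) := by
  rw [← (UpperPair.toSym2_injective hg).eq_iff, toSym2_sortPair, toSym2_sortPair, Sym2.eq_iff]

lemma sortPair_comm (hg : Function.Injective g) (a b : ι) : sortPair g a b = sortPair g b a :=
  (sortPair_eq_sortPair_iff hg).mpr (Or.inr ⟨rfl, rfl⟩)

end SortPair

section PairCount

variable {ι : Type*} [Fintype ι] [DecidableEq ι] {g : ι → ℕ}

def pairCount (g : ι → ℕ) (σ : Equiv.Perm ι) (p : UpperPair g) : ℕ :=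
  #{x | sortPair g (σ x) x = p}

lemma pairCount_sortPair (hg : Function.Injective g) (σ : Equiv.Perm ι) (a : ι) :
    pairCount g σ (sortPair g a (σ a)) = if σ (σ a) = a ∧ σ a ≠ a then 2 else 1 := by
  have hfiber : ({x | sortPair g (σ x) x = sortPair g a (σ a)} : Finset ι) =
      if σ (σ a) = a ∧ σ a ≠ a then {a, σ a} else {a} := by
    ext x
    simp only [mem_filter, mem_univ, true_and, sortPair_eq_sortPair_iff hg, σ.apply_eq_iff_eq]
    split_ifs <;> simp only [mem_insert, mem_singleton] <;> grind
  rw [pairCount, hfiber]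
  split_ifs with h
  exacts [card_pair (Ne.symm h.2), card_singleton a]

lemma exists_pairCount_eq_one (hg : Function.Injective g) {σ : Equiv.Perm ι}
    (hσ : ¬(σ * σ = 1 ∧ ∀ a, σ a ≠ a)) : ∃ p, pairCount g σ p = 1 := by
  have : ∃ a, ¬(σ (σ a) = a ∧ σ a ≠ a) := by
    by_contra! h
    exact hσ ⟨Equiv.ext fun a => (h a).1, fun a => (h a).2⟩
  obtain ⟨a, ha⟩ := this
  exact ⟨sortPair g a (σ a), by rw [pairCount_sortPair hg, if_neg ha]⟩

lemma prod_pairCount_of_involution {M : Type*} [CommMonoid M] (hg : Function.Injective g)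
    {σ : Equiv.Perm ι} (hσ : σ * σ = 1) (hfix : ∀ a, σ a ≠ a)
    (f : UpperPair g → ℕ → M) (hf : ∀ p, f p 0 = 1) :
    ∏ p, f p (pairCount g σ p) = ∏ a with g a < g (σ a), f (sortPair g a (σ a)) 2 := by
  have hinv : ∀ a, σ (σ a) = a := fun a => congrArg (· a) hσ
  have hlt : ∀ a, g a < g (σ a) ∨ g (σ a) < g a := fun a =>
    lt_or_gt_of_ne fun h => hfix a (hg h).symm
  set S : Finset ι := {a | g a < g (σ a)}
  have hinj : Set.InjOn (fun a => sortPair g a (σ a)) S := by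
    intro a ha b hb hab
    simp only [coe_filter, mem_univ, true_and, Set.mem_ofPred_eq, S] at ha hb
    rcases (sortPair_eq_sortPair_iff hg).mp hab with ⟨h, -⟩ | ⟨rfl, -⟩
    · exact h
    · rw [hinv] at ha; omega
  have hsupp : ∀ p ∉ S.image (fun a => sortPair g a (σ a)), pairCount g σ p = 0 := by
    intro p hp
    refine card_eq_zero.mpr (filter_eq_empty_iff.mpr fun x _ hx => hp ?_)
    simp only [mem_image, mem_filter, mem_univ, true_and, S]
    rcases hlt x with h | h
    · exact ⟨x, h, by rw [← hx, sortPair_comm hg]⟩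
    · exact ⟨σ x, by rwa [hinv], by rw [← hx, hinv]⟩
  rw [← prod_subset (subset_univ _) fun p _ hp => by rw [hsupp p hp, hf], prod_image hinj]
  refine prod_congr rfl fun a _ => ?_
  rw [pairCount_sortPair hg, if_pos ⟨hinv a, hfix a⟩]

end PairCount

theorem integral_det_gaussian_symmetric_eq_sum_matchings {ι : Type*} [Fintype ι]
    [DecidableEq ι] {g : ι → ℕ} (hg : Function.Injective g) (V : UpperPair g → ℝ≥0) :
    ∫ ω : UpperPair g → ℝ,
        Matrix.det (Matrix.of fun a b =>
          if h : g a ≤ g b then ω ⟨(a, b), h⟩ else ω ⟨(b, a), le_of_not_ge h⟩)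
        ∂Measure.pi (fun p => gaussianReal 0 (V p)) =
      ∑ σ with σ * σ = 1 ∧ ∀ a, σ a ≠ a,
        (Equiv.Perm.sign σ : ℝ) *
          ∏ a with g a < g (σ a), (V (sortPair g a (σ a)) : ℝ) := by
  have hentry : ∀ (ω : UpperPair g → ℝ) a b,
      (if h : g a ≤ g b then ω ⟨(a, b), h⟩ else ω ⟨(b, a), le_of_not_ge h⟩) =
        ω (sortPair g a b) := fun ω a b => (apply_dite ω _ _ _).symm
  have hint : ∀ n p, Integrable (fun t : ℝ => t ^ n) (gaussianReal 0 (V p)) :=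
    fun n p => integrable_pow_gaussianReal 0 _ n
  simp_rw [hentry, Matrix.det_apply', Matrix.of_apply]
  rw [integral_finsetSum _ fun σ _ =>
    (integrable_prod_comp _ (fun x => sortPair g (σ x) x) fun p n => hint n p).const_mul _]
  simp_rw [integral_const_mul, integral_prod_comp, ← pairCount.eq_def, sum_filter]
  refine sum_congr rfl fun σ _ => ?_
  split_ifs with hσ
  · rw [prod_pairCount_of_involution hg hσ.1 hσ.2
      (fun p n => ∫ t, t ^ n ∂gaussianReal 0 (V p)) fun p => by simp]
    simp_rw [integral_sq_gaussianReal]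
  · obtain ⟨p, hp⟩ := exists_pairCount_eq_one hg hσ
    rw [prod_eq_zero (mem_univ p) (by simp [hp, integral_id_gaussianReal]), mul_zero]

lemma idx_eq_finSigmaFinEquiv (r : ℕ) (m : Fin r → ℕ) (p : GroupedIdx r m) :
    idx r m p = finSigmaFinEquiv p := by
  rw [finSigmaFinEquiv_apply, idx, ← Fin.coe_castLEEmb, ← sum_map]
  congr 2
  ext j
  simp only [mem_filter, mem_univ, true_and, mem_map, Fin.coe_castLEEmb]
  exact ⟨fun h => ⟨⟨j, h⟩, rfl⟩, by rintro ⟨i, rfl⟩; exact i.2⟩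

lemma idx_injective (r : ℕ) (m : Fin r → ℕ) : Function.Injective (idx r m) := by
  intro p q h
  simp only [idx_eq_finSigmaFinEquiv] at h
  exact finSigmaFinEquiv.injective (Fin.ext h)

theorem expected_det_eq_matching_sum_general (r : ℕ) (d : Fin r → ℕ)
    (m : Fin r → ℕ) (vdiag : GroupedIdx r m → ℝ≥0) :
    (∫ ω : {p : GroupedIdx r m × GroupedIdx r m // idx r m p.1 ≤ idx r m p.2} → ℝ,
        Matrix.det (Matrix.of fun a b =>
          if h : idx r m a ≤ idx r m b then ω ⟨(a, b), h⟩
          else ω ⟨(b, a), le_of_not_ge h⟩)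
        ∂(Measure.pi fun p =>
            gaussianReal 0
              (if p.1.1 = p.1.2 then vdiag p.1.1
               else if p.1.1.1 = p.1.2.1 then (d p.1.1.1 * (d p.1.1.1 - 1) : ℕ)
               else 1))) =
      (-1 : ℝ) ^ ((∑ k, m k) / 2) *
        ∑ σ ∈ Finset.univ.filter
            (fun σ : Equiv.Perm (GroupedIdx r m) => σ * σ = 1 ∧ ∀ a, σ a ≠ a),
          ∏ a ∈ Finset.univ.filter (fun a => idx r m a < idx r m (σ a)),
            pairWeight r d m a (σ a) := by
  rw [integral_det_gaussian_symmetric_eq_sum_matchings (idx_injective r m), mul_sum]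
  refine sum_congr rfl fun σ hσ => ?_
  obtain ⟨hinv, hfix⟩ := (mem_filter.mp hσ).2
  have hcard : Fintype.card (GroupedIdx r m) = ∑ k, m k := by simp
  rw [Equiv.Perm.sign_of_fixedPointFree_involution hinv hfix, hcard]
  push_cast
  refine congrArg _ (prod_congr rfl fun a ha => ?_)
  have hlt : idx r m a < idx r m (σ a) := (mem_filter.mp ha).2
  rw [sortPair_of_le hlt.le, pairWeight, if_neg (hfix a).symm]
  split_ifs <;> norm_cast

/-- let `L` be the random symmetric matrix, indexed by the grouped
vertex set, with independent centered Gaussian entries of variance `d_k(d_k − 1)` within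
group `I_k` and `1` across groups (arbitrary variances `vdiag` on the diagonal), modelled
on a product of Gaussian measures over the upper-triangular index pairs. Then
`E[det L] = D_d(m₁, …, m_r)`, where `D_d` is `(−1)^{m/2}` times the sum of the weights of
all perfect matchings (identified with fixed-point-free involutions `σ`). -/
theorem expected_det_eq_matching_sum (r : ℕ) (d : Fin r → ℕ) (hd : ∀ k, 0 < d k)
    (m : Fin r → ℕ) (vdiag : GroupedIdx r m → ℝ≥0) :
    (∫ ω : {p : GroupedIdx r m × GroupedIdx r m // idx r m p.1 ≤ idx r m p.2} → ℝ,
        Matrix.det (Matrix.of fun a b =>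
          if h : idx r m a ≤ idx r m b then ω ⟨(a, b), h⟩
          else ω ⟨(b, a), le_of_not_ge h⟩)
        ∂(Measure.pi fun p =>
            gaussianReal 0
              (if p.1.1 = p.1.2 then vdiag p.1.1
               else if p.1.1.1 = p.1.2.1 then (d p.1.1.1 * (d p.1.1.1 - 1) : ℕ)
               else 1))) =
      (-1 : ℝ) ^ ((∑ k, m k) / 2) *
        ∑ σ ∈ Finset.univ.filter
            (fun σ : Equiv.Perm (GroupedIdx r m) => σ * σ = 1 ∧ ∀ a, σ a ≠ a),
          ∏ a ∈ Finset.univ.filter (fun a => idx r m a < idx r m (σ a)),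
            pairWeight r d m a (σ a) :=
  expected_det_eq_matching_sum_general r d m vdiag
end
end
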